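/- Let d ∈ ℕ, r > 0, a ∈ ℝ^d with ‖a‖₂ = 1, let x be a Gaussian random vector in ℝ^d with distribution N(0, r²·Id), let w ∈ ℝ^d, and set c = ⟨a, w⟩ and c' = √(‖w‖₂² − c²). Then E[1 − sgn(⟨x, a⟩)·⟨x, w⟩]₊ = (1/(2π))·∫_{ℝ²} [1 − c r |t₁| − c' r t₂]₊·e^{−(t₁² + t₂²)/2} dt₁ dt₂. -/

import Mathlib

open MeasureTheory ProbabilityTheory Real

noncomputable section

/-- The centered Gaussian distribution `N(0, r²·Id)` on `ℝ^d`. -/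
def gaussVec (d : ℕ) (r : ℝ) : Measure (Fin d → ℝ) :=
  Measure.pi fun _ => gaussianReal 0 (Real.toNNReal (r ^ 2))

/-- Euclidean inner product on `Fin d → ℝ`. -/
def inn {d : ℕ} (v w : Fin d → ℝ) : ℝ := ∑ j, v j * w j

/-- ℓ²-norm on `Fin d → ℝ`. -/
def l2 {d : ℕ} (w : Fin d → ℝ) : ℝ := Real.sqrt (∑ j, (w j) ^ 2)

/-!
The pair `(⟨x, a⟩, ⟨x, w⟩)` is a centered Gaussian vector whose covariance is `r²` times the Gram
matrix of `a, w`; the vectors `(1, 0), (c, c')` of `ℝ²` have the same Gram matrix, so the pair has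
the law of `r • (t₁, c t₁ + c' t₂)` with `t₁, t₂` independent standard normals. Then
`sgn(t₁) (c t₁ + c' t₂) = c |t₁| + c' sgn(t₁) t₂`, and `(t₁, sgn(t₁) t₂)` is again standard
normal on `ℝ²` since `t₂` is symmetric and independent of `t₁`.
-/

open scoped RealInnerProductSpace
open WithLp

@[fun_prop]
lemma Real.measurable_sign : Measurable Real.sign :=
  Measurable.ite measurableSet_Iio measurable_const
    (Measurable.ite measurableSet_Ioi measurable_const measurable_const)

lemma Real.sign_mul_self (t : ℝ) : Real.sign t * t = |t| := by
  rcases lt_trichotomy t 0 with h | rfl | h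
  · rw [Real.sign_of_neg h, abs_of_neg h, neg_one_mul]
  · simp
  · rw [Real.sign_of_pos h, abs_of_pos h, one_mul]

lemma Real.sign_mul_of_pos {r : ℝ} (hr : 0 < r) (t : ℝ) : Real.sign (r * t) = Real.sign t := by
  rcases lt_trichotomy t 0 with h | rfl | h
  · rw [Real.sign_of_neg h, Real.sign_of_neg (mul_neg_of_pos_of_neg hr h)]
  · simp
  · rw [Real.sign_of_pos h, Real.sign_of_pos (mul_pos hr h)]

lemma norm_smul_add_smul_sq {E : Type*} [NormedAddCommGroup E] [InnerProductSpace ℝ E]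
    (s t : ℝ) (u₁ u₂ : E) :
    ‖s • u₁ + t • u₂‖ ^ 2 = s ^ 2 * ⟪u₁, u₁⟫ + 2 * s * t * ⟪u₁, u₂⟫ + t ^ 2 * ⟪u₂, u₂⟫ := by
  rw [← real_inner_self_eq_norm_sq]
  simp only [inner_add_left, inner_add_right, real_inner_smul_left, real_inner_smul_right,
    real_inner_comm u₁ u₂]
  ring

lemma strongDual_comp_prod_innerSL {E : Type*} [NormedAddCommGroup E] [InnerProductSpace ℝ E]
    (L : StrongDual ℝ (ℝ × ℝ)) (u₁ u₂ : E) :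
    L.comp ((innerSL ℝ u₁).prod (innerSL ℝ u₂)) = innerSL ℝ (L (1, 0) • u₁ + L (0, 1) • u₂) := by
  ext y
  have hL : L (⟪u₁, y⟫, ⟪u₂, y⟫) = ⟪u₁, y⟫ * L (1, 0) + ⟪u₂, y⟫ * L (0, 1) := by
    rw [← smul_eq_mul, ← smul_eq_mul, ← L.map_smul, ← L.map_smul, ← L.map_add]
    simp
  simp [hL, mul_comm]

lemma stdGaussian_map_ofLp (ι : Type*) [Fintype ι] :
    (stdGaussian (EuclideanSpace ℝ ι)).map ofLp = Measure.pi fun _ : ι ↦ gaussianReal 0 1 := by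
  rw [← map_pi_eq_stdGaussian, Measure.map_map (by fun_prop) (by fun_prop)]
  exact Measure.map_id

section InnerPair

variable {E F : Type*} [NormedAddCommGroup E] [InnerProductSpace ℝ E] [FiniteDimensional ℝ E]
  [MeasurableSpace E] [BorelSpace E] [NormedAddCommGroup F] [InnerProductSpace ℝ F]
  [FiniteDimensional ℝ F] [MeasurableSpace F] [BorelSpace F]

/-- Both laws have characteristic function `L ↦ exp (-‖L (1, 0) • u₁ + L (0, 1) • u₂‖² / 2)`,
which only depends on the Gram matrix. -/
theorem stdGaussian_map_inner_pair_eq {u₁ u₂ : E} {v₁ v₂ : F}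
    (h₁₁ : ⟪u₁, u₁⟫ = ⟪v₁, v₁⟫) (h₁₂ : ⟪u₁, u₂⟫ = ⟪v₁, v₂⟫) (h₂₂ : ⟪u₂, u₂⟫ = ⟪v₂, v₂⟫) :
    (stdGaussian E).map (fun y ↦ (⟪u₁, y⟫, ⟪u₂, y⟫))
      = (stdGaussian F).map (fun y ↦ (⟪v₁, y⟫, ⟪v₂, y⟫)) := by
  have hu : (fun y ↦ (⟪u₁, y⟫, ⟪u₂, y⟫)) = ⇑((innerSL ℝ u₁).prod (innerSL ℝ u₂)) := rfl
  have hv : (fun y ↦ (⟪v₁, y⟫, ⟪v₂, y⟫)) = ⇑((innerSL ℝ v₁).prod (innerSL ℝ v₂)) := rfl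
  rw [hu, hv]
  refine Measure.ext_of_charFunDual (funext fun L ↦ ?_)
  rw [charFunDual_map, charFunDual_map, strongDual_comp_prod_innerSL,
    strongDual_comp_prod_innerSL, charFunDual_stdGaussian, charFunDual_stdGaussian,
    innerSL_apply_norm, innerSL_apply_norm]
  simp only [← Complex.ofReal_pow, norm_smul_add_smul_sq, h₁₁, h₁₂, h₂₂]

theorem stdGaussian_map_inner_pair_eq_map_prod {u₁ u₂ : E} (hu₁ : ‖u₁‖ = 1) :
    (stdGaussian E).map (fun y ↦ (⟪u₁, y⟫, ⟪u₂, y⟫))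
      = ((gaussianReal 0 1).prod (gaussianReal 0 1)).map
          (fun t ↦ (t.1, ⟪u₁, u₂⟫ * t.1 + √(‖u₂‖ ^ 2 - ⟪u₁, u₂⟫ ^ 2) * t.2)) := by
  set c := ⟪u₁, u₂⟫
  set c' := √(‖u₂‖ ^ 2 - c ^ 2)
  have hcs : c ^ 2 ≤ ‖u₂‖ ^ 2 := by
    have := abs_real_inner_le_norm u₁ u₂
    rw [hu₁, one_mul] at this
    exact sq_le_sq' (abs_le.1 this).1 (abs_le.1 this).2
  have hprod : (gaussianReal 0 1).prod (gaussianReal 0 1)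
      = (stdGaussian (EuclideanSpace ℝ (Fin 2))).map (MeasurableEquiv.finTwoArrow ∘ ofLp) := by
    rw [← Measure.map_map (by fun_prop) (by fun_prop), stdGaussian_map_ofLp,
      (measurePreserving_finTwoArrow _).map_eq]
  rw [hprod, Measure.map_map (by fun_prop) (by fun_prop)]
  have h₁₁ : ⟪u₁, u₁⟫ = ⟪(!₂[1, 0] : EuclideanSpace ℝ (Fin 2)), !₂[1, 0]⟫ := by
    simp only [PiLp.inner_apply, Fin.sum_univ_two, real_inner_self_eq_norm_sq, hu₁]
    simp
  have h₁₂ : ⟪u₁, u₂⟫ = ⟪(!₂[1, 0] : EuclideanSpace ℝ (Fin 2)), !₂[c, c']⟫ := by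
    simp [PiLp.inner_apply, c]
  have h₂₂ : ⟪u₂, u₂⟫ = ⟪(!₂[c, c'] : EuclideanSpace ℝ (Fin 2)), !₂[c, c']⟫ := by
    simp only [PiLp.inner_apply, Fin.sum_univ_two, real_inner_self_eq_norm_sq]
    simp [c', Real.sq_sqrt (sub_nonneg.2 hcs)]
  rw [stdGaussian_map_inner_pair_eq h₁₁ h₁₂ h₂₂]
  congr with y <;> simp [PiLp.inner_apply, Fin.sum_univ_two, mul_comm]

end InnerPair

/-- The map `(t₁, t₂) ↦ (t₁, ±t₂)` with the sign chosen by `t₁` preserves `μ.prod ν`; it agrees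
with `(t₁, t₂) ↦ (t₁, sgn t₁ * t₂)` off the null set `{t₁ = 0}`. -/
theorem integral_prod_sign_mul_snd {μ ν : Measure ℝ} [SFinite μ] [SFinite ν]
    [NullSingletonClass μ] (hν : ν.map (fun y ↦ -y) = ν) {f : ℝ × ℝ → ℝ}
    (hf : AEStronglyMeasurable f (μ.prod ν)) :
    ∫ p, f (p.1, Real.sign p.1 * p.2) ∂(μ.prod ν) = ∫ p, f p ∂(μ.prod ν) := by
  set T : ℝ × ℝ → ℝ × ℝ := fun p ↦ (p.1, if p.1 < 0 then -p.2 else p.2)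
  have hT : MeasurePreserving T (μ.prod ν) (μ.prod ν) := by
    refine (MeasurePreserving.id μ).skew_product (g := fun x y ↦ if x < 0 then -y else y)
      (Measurable.ite (measurableSet_lt measurable_fst measurable_const) measurable_snd.neg
        measurable_snd) (ae_of_all _ fun x ↦ ?_)
    split_ifs
    · exact hν
    · exact Measure.map_id
  have hsign : ∀ᵐ p ∂(μ.prod ν), (p.1, Real.sign p.1 * p.2) = T p := by
    refine Measure.quasiMeasurePreserving_fst.ae (μ.ae_ne 0) |>.mono fun p hp ↦ ?_
    rcases hp.lt_or_gt with hneg | hpos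
    · simp [T, hneg, Real.sign_of_neg hneg]
    · simp [T, hpos.not_gt, Real.sign_of_pos hpos]
  rw [integral_congr_ae (hsign.mono fun p hp ↦ congrArg f hp),
    ← integral_map hT.aemeasurable (by rwa [hT.map_eq]), hT.map_eq]

theorem integral_gaussianReal_prod (f : ℝ × ℝ → ℝ) :
    ∫ p, f p ∂((gaussianReal 0 1).prod (gaussianReal 0 1))
      = 1 / (2 * π) * ∫ p, f p * exp (-(p.1 ^ 2 + p.2 ^ 2) / 2) := by
  rw [gaussianReal_of_var_ne_zero 0 one_ne_zero,
    prod_withDensity (measurable_gaussianPDF _ _) (measurable_gaussianPDF _ _),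
    ← Measure.volume_eq_prod, integral_withDensity_eq_integral_toReal_smul
      (f := fun z : ℝ × ℝ ↦ gaussianPDF 0 1 z.1 * gaussianPDF 0 1 z.2) (by fun_prop)
      (ae_of_all _ fun _ ↦ ENNReal.mul_lt_top ENNReal.ofReal_lt_top ENNReal.ofReal_lt_top),
    ← integral_const_mul]
  congr with p
  simp only [gaussianPDF, gaussianPDFReal, smul_eq_mul, ENNReal.toReal_mul, NNReal.coe_one,
    mul_one, sub_zero]
  rw [ENNReal.toReal_ofReal (by positivity), ENNReal.toReal_ofReal (by positivity)]
  field_simp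
  rw [Real.sq_sqrt (by positivity), mul_assoc (2 * π), ← Real.exp_add]
  ring_nf

theorem integral_hinge_sign_gaussianReal_prod (c c' r : ℝ) :
    ∫ t, max (1 - Real.sign t.1 * (r * (c * t.1 + c' * t.2))) 0
        ∂((gaussianReal 0 1).prod (gaussianReal 0 1))
      = 1 / (2 * π) * ∫ p : ℝ × ℝ,
          max (1 - c * r * |p.1| - c' * r * p.2) 0 * exp (-(p.1 ^ 2 + p.2 ^ 2) / 2) := by
  have : NullSingletonClass (gaussianReal 0 1) := nullSingletonClass_gaussianReal one_ne_zero
  have hsign (t : ℝ × ℝ) : Real.sign t.1 * (r * (c * t.1 + c' * t.2))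
      = c * r * |t.1| + c' * r * (Real.sign t.1 * t.2) := by
    rw [← Real.sign_mul_self]; ring
  simp_rw [hsign, sub_add_eq_sub_sub]
  rw [integral_prod_sign_mul_snd (f := fun p ↦ max (1 - c * r * |p.1| - c' * r * p.2) 0)
    (by simpa using gaussianReal_map_neg (μ := 0) (v := 1)) (by fun_prop)]
  exact integral_gaussianReal_prod _

lemma gaussVec_eq_map_stdGaussian (d : ℕ) (r : ℝ) :
    gaussVec d r = (stdGaussian (EuclideanSpace ℝ (Fin d))).map (fun y ↦ r • ofLp y) := by
  have hscale : (gaussianReal 0 1).map (r * ·) = gaussianReal 0 (Real.toNNReal (r ^ 2)) := by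
    rw [gaussianReal_map_const_mul, mul_zero, mul_one]
    congr 1
    ext
    simp [sq_nonneg]
  rw [show (fun y : EuclideanSpace ℝ (Fin d) ↦ r • ofLp y) = (r • ·) ∘ ofLp from rfl,
    ← Measure.map_map (by fun_prop) (by fun_prop), stdGaussian_map_ofLp, gaussVec,
    ← funext fun _ ↦ hscale, ← Measure.pi_map_pi fun _ ↦ by fun_prop]
  rfl

lemma inn_eq_inner {d : ℕ} (v w : Fin d → ℝ) : inn v w = ⟪toLp 2 v, toLp 2 w⟫ := by
  simp [inn, PiLp.inner_apply, mul_comm]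

lemma l2_eq_norm {d : ℕ} (v : Fin d → ℝ) : l2 v = ‖toLp 2 v‖ := by
  simp [l2, EuclideanSpace.norm_eq]

/-- Lemma 9(2): for `x ∼ N(0, r²·Id)`, `‖a‖₂ = 1`, `c = ⟨a,w⟩`, `c' = √(‖w‖₂² - c²)`,
`E [1 - sgn(⟨x,a⟩)⟨x,w⟩]₊ = (1/(2π)) ∫_{ℝ²} [1 - cr|t₁| - c'rt₂]₊ e^{-(t₁²+t₂²)/2} dt₁ dt₂`. -/
theorem expectation_f_a_at_w (d : ℕ) (r : ℝ) (hr : 0 < r)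
    (a : Fin d → ℝ) (ha : l2 a = 1) (w : Fin d → ℝ)
    (c c' : ℝ) (hc : c = inn a w) (hc' : c' = Real.sqrt ((l2 w) ^ 2 - c ^ 2)) :
    (∫ x, max (1 - Real.sign (inn x a) * inn x w) 0 ∂gaussVec d r)
      = (1 / (2 * π)) * ∫ p : ℝ × ℝ,
          max (1 - c * r * |p.1| - c' * r * p.2) 0 * Real.exp (-(p.1 ^ 2 + p.2 ^ 2) / 2) := by
  rw [l2_eq_norm] at ha hc'
  rw [inn_eq_inner] at hc
  set E := EuclideanSpace ℝ (Fin d)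
  have hlaw := stdGaussian_map_inner_pair_eq_map_prod (E := E) (u₂ := toLp 2 w) ha
  rw [← hc, ← hc'] at hlaw
  set H : ℝ × ℝ → ℝ := fun q ↦ max (1 - Real.sign q.1 * (r * q.2)) 0
  have hH : Measurable H := by fun_prop
  calc (∫ x, max (1 - Real.sign (inn x a) * inn x w) 0 ∂gaussVec d r)
      = ∫ y : E, H (⟪toLp 2 a, y⟫, ⟪toLp 2 w, y⟫) ∂stdGaussian E := by
        rw [gaussVec_eq_map_stdGaussian, integral_map (by fun_prop) (by unfold inn; fun_prop)]
        congr with y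
        simp [H, inn_eq_inner, real_inner_comm, inner_smul_left, Real.sign_mul_of_pos hr]
    _ = ∫ t, H (t.1, c * t.1 + c' * t.2) ∂((gaussianReal 0 1).prod (gaussianReal 0 1)) := by
        rw [← integral_map (by fun_prop) hH.aestronglyMeasurable, hlaw,
          integral_map (by fun_prop) hH.aestronglyMeasurable]
    _ = _ := integral_hinge_sign_gaussianReal_prod c c' r
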